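/- arXiv:0903.2926 — 4 statements merged into one kernel-verified Lean document; each statement's English description precedes it below -/
import Mathlib

section
/- Let P(X) = X³ − kX² + lX − 1 be a polynomial with integer coefficients k, l. Then P has a double real root X₀ if and only if X₀ = 1 (in which case P(X) = X³ − 3X² + 3X − 1) or X₀ = −1 (in which case P(X) = X³ + X² − X − 1). -/
/-!
A double root `t` of `P = X³ - kX² + lX - 1` is a common root of `P` and `P'`. The remainder
`9P - (3X - k)P' = (6l - 2k²)X + (kl - 9)` shows that `t` is rational, unless `6l = 2k²`, in which
case `P'` is `3(X - k/3)²` and again `t = k/3` is rational. A rational root of a monic integer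
polynomial is an integer, and as the constant term is `-1` it is `±1`; then `P(±1) = P'(±1) = 0`
determines `k` and `l`.
-/

open Polynomial

theorem sq_X_sub_C_dvd_iff {R : Type*} [CommRing R] {p : R[X]} {t : R} :
    (X - C t) ^ 2 ∣ p ↔ p.IsRoot t ∧ p.derivative.IsRoot t := by
  rcases eq_or_ne p 0 with rfl | hp
  · simp
  rw [← le_rootMultiplicity_iff hp, ← one_lt_rootMultiplicity_iff_isRoot hp]
  rfl

theorem cubic_eq_cubic_iff {R : Type*} [CommRing R] {a b c d : R} :
    (X ^ 3 - C a * X ^ 2 + C b * X - 1 : R[X]) = X ^ 3 - C c * X ^ 2 + C d * X - 1 ↔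
      a = c ∧ b = d := by
  refine ⟨fun h ↦ ⟨?_, ?_⟩, fun ⟨rfl, rfl⟩ ↦ rfl⟩
  · simpa using congrArg (coeff · 2) h
  · simpa using congrArg (coeff · 1) h

theorem linear_relation_of_double_root {R : Type*} [CommRing R] {k l t : R}
    (h₀ : t ^ 3 - k * t ^ 2 + l * t - 1 = 0) (h₁ : 3 * t ^ 2 - 2 * k * t + l = 0) :
    t * (6 * l - 2 * k ^ 2) = 9 - k * l := by
  linear_combination 9 * h₀ - (3 * t - k) * h₁

theorem exists_rat_eq_of_double_root {k l : ℤ} {t : ℝ}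
    (h₀ : t ^ 3 - k * t ^ 2 + l * t - 1 = 0) (h₁ : 3 * t ^ 2 - 2 * k * t + l = 0) :
    ∃ q : ℚ, (q : ℝ) = t := by
  by_cases hD : (6 * l - 2 * k ^ 2 : ℝ) = 0
  · refine ⟨k / 3, ?_⟩
    have : (3 * t - k) ^ 2 = 0 := by linear_combination 3 * h₁ - hD / 2
    push_cast
    linarith [pow_eq_zero_iff (n := 2) two_ne_zero |>.mp this]
  · refine ⟨(9 - k * l) / (6 * l - 2 * k ^ 2), ?_⟩
    push_cast
    exact (eq_div_of_mul_eq hD (linear_relation_of_double_root h₀ h₁)).symm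

theorem rat_root_eq_one_or_neg_one {k l : ℤ} {q : ℚ}
    (h : q ^ 3 - k * q ^ 2 + l * q - 1 = 0) : q = 1 ∨ q = -1 := by
  have hq : IsIntegral ℤ q := by
    refine ⟨X ^ 3 - C k * X ^ 2 + C l * X - 1, by monicity!, ?_⟩
    simpa [-eq_intCast] using h
  obtain ⟨n, rfl⟩ := IsIntegrallyClosed.isIntegral_iff.mp hq
  have : n * (n ^ 2 - k * n + l) = 1 := by
    have : ((n * (n ^ 2 - k * n + l) : ℤ) : ℚ) = 1 := by push_cast; linear_combination h
    exact_mod_cast this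
  rcases Int.eq_one_or_neg_one_of_mul_eq_one this with rfl | rfl <;> simp

theorem double_root_iff {k l : ℤ} {t : ℝ} :
    (t ^ 3 - k * t ^ 2 + l * t - 1 = 0 ∧ 3 * t ^ 2 - 2 * k * t + l = 0) ↔
      (t = 1 ∧ (k : ℝ) = 3 ∧ (l : ℝ) = 3) ∨ (t = -1 ∧ (k : ℝ) = -1 ∧ (l : ℝ) = -1) := by
  constructor
  · rintro ⟨h₀, h₁⟩
    obtain ⟨q, rfl⟩ := exists_rat_eq_of_double_root h₀ h₁
    have hq : q ^ 3 - k * q ^ 2 + l * q - 1 = 0 := by exact_mod_cast h₀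
    rcases rat_root_eq_one_or_neg_one hq with rfl | rfl
    · left; norm_num at h₀ h₁ ⊢; constructor <;> linarith
    · right; norm_num at h₀ h₁ ⊢; constructor <;> linarith
  · rintro (⟨rfl, hk, hl⟩ | ⟨rfl, hk, hl⟩) <;> rw [hk, hl] <;> norm_num

/-- For `P(X) = X³ − kX² + lX − 1` with integer coefficients, `P` has a double real
root `X₀` if and only if `X₀ = 1` (and then `P = X³ − 3X² + 3X − 1`) or `X₀ = −1`
(and then `P = X³ + X² − X − 1`). -/
theorem stmt_2 (k l : ℤ) (X₀ : ℝ) :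
    ((X - C X₀) ^ 2 ∣
        (X ^ 3 - C (k : ℝ) * X ^ 2 + C (l : ℝ) * X - 1 : Polynomial ℝ)) ↔
      (X₀ = 1 ∧
        (X ^ 3 - C (k : ℝ) * X ^ 2 + C (l : ℝ) * X - 1 : Polynomial ℝ) =
          X ^ 3 - C 3 * X ^ 2 + C 3 * X - 1) ∨
      (X₀ = -1 ∧
        (X ^ 3 - C (k : ℝ) * X ^ 2 + C (l : ℝ) * X - 1 : Polynomial ℝ) =
          X ^ 3 + X ^ 2 - X - 1) := by
  have hneg : (X ^ 3 + X ^ 2 - X - 1 : ℝ[X]) = X ^ 3 - C (-1) * X ^ 2 + C (-1) * X - 1 := by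
    simp only [map_neg, map_one]; ring
  rw [hneg, cubic_eq_cubic_iff, cubic_eq_cubic_iff, sq_X_sub_C_dvd_iff, ← double_root_iff]
  simp only [IsRoot, eval_sub, eval_add, eval_mul, eval_pow, eval_X, eval_C, eval_one, eval_zero,
    derivative_sub, derivative_add, derivative_mul, derivative_X_pow, derivative_C, derivative_X,
    derivative_one]
  ring_nf
end

section
/- Let P(X) = X⁴ − mX³ + pX² − nX + 1 with m, n, p ∈ ℤ. If P has a complex root of multiplicity greater than 1, then the multiset of roots of P equals {1, 1, a, a⁻¹}, {−1, −1, a, a⁻¹}, {a, a⁻¹, a, a⁻¹}, or {a, −a⁻¹, a, −a⁻¹} for some a ∈ ℂ. -/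
/-!
A multiple root `z` of the integer polynomial `f = X⁴ - mX³ + pX² - nX + 1` is a simple root of
its minimal polynomial `μ` over `ℤ` (separability in characteristic 0), so `μ` divides both `f`
and `f / μ`: `f = μ² T` with `μ, T` monic in `ℤ[X]`. Comparing constant terms, `μ(0)² T(0) = 1`
in `ℤ`, hence `μ(0) = ±1` and `T(0) = 1`. Either `μ = X ∓ 1` and `T` is a quadratic with root
product `1`, or `μ` is a quadratic with root product `±1` and `T = 1`.
-/

open Polynomial

section AlgClosed

variable {K : Type*} [Field K] [IsAlgClosed K]

theorem Polynomial.Monic.exists_roots_eq_pair_of_natDegree_eq_two {q : K[X]} (hq : q.Monic)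
    (hd : q.natDegree = 2) (h0 : q.coeff 0 ≠ 0) : ∃ a, q.roots = {a, q.coeff 0 * a⁻¹} := by
  obtain ⟨a, b, hab⟩ := Multiset.card_eq_two.mp (IsAlgClosed.card_roots_eq_natDegree.trans hd)
  have hprod : q.coeff 0 = a * b := by
    rw [(IsAlgClosed.splits q).coeff_zero_eq_prod_roots_of_monic hq, hd, hab]
    simp
  have ha : a ≠ 0 := by rintro rfl; simp_all
  exact ⟨a, by rw [hab, hprod, mul_comm a, mul_assoc, mul_inv_cancel₀ ha, mul_one]⟩

omit [IsAlgClosed K] in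
theorem Polynomial.roots_eq_of_natDegree_eq_one {g : K[X]} (hg : g.Monic) (hd : g.natDegree = 1) :
    g.roots = {-g.coeff 0} := by
  rw [hg.eq_X_add_C hd, ← sub_neg_eq_add, ← C_neg, roots_X_sub_C]
  simp

theorem Polynomial.exists_roots_sq_mul_eq_of_coeff_zero {g h : K[X]} (hg : g.Monic) (hh : h.Monic)
    (hdeg : 2 * g.natDegree + h.natDegree = 4) (hg_pos : 0 < g.natDegree)
    (hg0 : g.coeff 0 = 1 ∨ g.coeff 0 = -1) (hh0 : h.coeff 0 = 1) :
    ∃ a : K,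
      (g ^ 2 * h).roots = {1, 1, a, a⁻¹} ∨
      (g ^ 2 * h).roots = {-1, -1, a, a⁻¹} ∨
      (g ^ 2 * h).roots = {a, a⁻¹, a, a⁻¹} ∨
      (g ^ 2 * h).roots = {a, -a⁻¹, a, -a⁻¹} := by
  have hroots : (g ^ 2 * h).roots = 2 • g.roots + h.roots := by
    rw [roots_mul ((hg.pow 2).mul hh).ne_zero, roots_pow]
  rw [hroots, two_nsmul]
  obtain hd | hd : g.natDegree = 1 ∨ g.natDegree = 2 := by omega
  · obtain ⟨a, ha⟩ := hh.exists_roots_eq_pair_of_natDegree_eq_two (by omega) (by simp [hh0])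
    refine ⟨a, ?_⟩
    rw [roots_eq_of_natDegree_eq_one hg hd, ha, hh0, one_mul, add_assoc, Multiset.singleton_add,
      Multiset.singleton_add]
    rcases hg0 with hg0 | hg0 <;> rw [hg0]
    · exact Or.inr (Or.inl rfl)
    · exact Or.inl (by rw [neg_neg]; rfl)
  · have h1 : h = 1 := hh.natDegree_eq_zero.mp (by omega)
    obtain ⟨a, ha⟩ := hg.exists_roots_eq_pair_of_natDegree_eq_two hd
      (by rcases hg0 with hg0 | hg0 <;> simp [hg0])
    refine ⟨a, ?_⟩
    rw [h1, roots_one, Multiset.empty_eq_zero, add_zero, ha]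
    rcases hg0 with hg0 | hg0 <;> rw [hg0]
    · exact Or.inr (Or.inr (Or.inl (by rw [one_mul]; rfl)))
    · exact Or.inr (Or.inr (Or.inr (by rw [neg_one_mul]; rfl)))

end AlgClosed

theorem minpoly.sq_dvd_of_aeval_derivative_eq_zero {A : Type*} [Field A] [CharZero A] {z : A}
    (hz : IsIntegral ℤ z) {f : ℤ[X]} (hf : Polynomial.aeval z f = 0)
    (hf' : Polynomial.aeval z (derivative f) = 0) :
    minpoly ℤ z ^ 2 ∣ f := by
  have hμ' : Polynomial.aeval z (derivative (minpoly ℤ z)) ≠ 0 := by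
    -- the minimal polynomial over `ℤ` is the one over `ℚ`, which is separable in characteristic 0
    have hsep := (minpoly.irreducible (hz.tower_top (A := ℚ))).separable
    rw [minpoly.isIntegrallyClosed_eq_field_fractions' ℚ hz] at hsep
    have := hsep.aeval_derivative_ne_zero (x := z) (by rw [aeval_map_algebraMap, minpoly.aeval])
    rwa [derivative_map, aeval_map_algebraMap] at this
  obtain ⟨S, rfl⟩ := minpoly.isIntegrallyClosed_dvd hz hf
  have hS : Polynomial.aeval z S = 0 := by
    simpa [derivative_mul, minpoly.aeval, hμ'] using hf'
  obtain ⟨T, rfl⟩ := minpoly.isIntegrallyClosed_dvd hz hS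
  exact ⟨T, by ring⟩

theorem Int.eq_one_or_neg_one_and_eq_one_of_sq_mul_eq_one {a b : ℤ} (h : a ^ 2 * b = 1) :
    (a = 1 ∨ a = -1) ∧ b = 1 := by
  have ha : a = 1 ∨ a = -1 := Int.isUnit_iff.mp (.of_mul_eq_one (a * b) (by linarith))
  refine ⟨ha, ?_⟩
  rcases ha with rfl | rfl <;> linarith

theorem Polynomial.exists_roots_map_eq_of_one_lt_rootMultiplicity {A : Type*} [Field A]
    [IsAlgClosed A] [CharZero A] {f : ℤ[X]} (hf : f.Monic) (hd : f.natDegree = 4) (h0 : f.coeff 0 = 1) {z : A}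
    (hz : 1 < (f.map (algebraMap ℤ A)).rootMultiplicity z) :
    ∃ a : A,
      (f.map (algebraMap ℤ A)).roots = {1, 1, a, a⁻¹} ∨
      (f.map (algebraMap ℤ A)).roots = {-1, -1, a, a⁻¹} ∨
      (f.map (algebraMap ℤ A)).roots = {a, a⁻¹, a, a⁻¹} ∨
      (f.map (algebraMap ℤ A)).roots = {a, -a⁻¹, a, -a⁻¹} := by
  obtain ⟨hroot, hroot'⟩ := (one_lt_rootMultiplicity_iff_isRoot (hf.map _).ne_zero).mp hz
  rw [IsRoot, eval_map_algebraMap] at hroot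
  rw [IsRoot, derivative_map, eval_map_algebraMap] at hroot'
  have hint : IsIntegral ℤ z := ⟨f, hf, hroot⟩
  have hμ := minpoly.monic hint
  obtain ⟨T, rfl⟩ := minpoly.sq_dvd_of_aeval_derivative_eq_zero hint hroot hroot'
  have hT : T.Monic := (hμ.pow 2).of_mul_monic_left hf
  rw [(hμ.pow 2).natDegree_mul hT, hμ.natDegree_pow] at hd
  obtain ⟨hμ0, hT0⟩ := Int.eq_one_or_neg_one_and_eq_one_of_sq_mul_eq_one
    (by rwa [sq, mul_coeff_zero, mul_coeff_zero, ← sq] at h0)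
  rw [Polynomial.map_mul, Polynomial.map_pow]
  refine exists_roots_sq_mul_eq_of_coeff_zero (hμ.map _) (hT.map _) ?_ ?_ ?_ ?_
  · rwa [hμ.natDegree_map, hT.natDegree_map]
  · rw [hμ.natDegree_map]; exact minpoly.natDegree_pos hint
  · rcases hμ0 with h | h <;> simp [coeff_map, h]
  · simp [coeff_map, hT0]

/-- Let `P(X) = X⁴ − mX³ + pX² − nX + 1` with `m, n, p ∈ ℤ`. If `P` has a complex
root of multiplicity greater than one, then the multiset of complex roots of `P`
is `{1, 1, a, a⁻¹}`, `{−1, −1, a, a⁻¹}`, `{a, a⁻¹, a, a⁻¹}` or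
`{a, −a⁻¹, a, −a⁻¹}` for some `a ∈ ℂ`. -/
theorem stmt_3 (m n p : ℤ)
    (P : Polynomial ℂ)
    (hP : P = X ^ 4 - C (m : ℂ) * X ^ 3 + C (p : ℂ) * X ^ 2 - C (n : ℂ) * X + 1)
    (hmult : ∃ z : ℂ, 1 < P.rootMultiplicity z) :
    ∃ a : ℂ,
      P.roots = {1, 1, a, a⁻¹} ∨
      P.roots = {-1, -1, a, a⁻¹} ∨
      P.roots = {a, a⁻¹, a, a⁻¹} ∨
      P.roots = {a, -a⁻¹, a, -a⁻¹} := by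
  set f : ℤ[X] := X ^ 4 - C m * X ^ 3 + C p * X ^ 2 - C n * X + 1
  have hf : f.map (algebraMap ℤ ℂ) = P := by simp [f, hP]
  obtain ⟨z, hz⟩ := hmult
  rw [← hf] at hz ⊢
  exact exists_roots_map_eq_of_one_lt_rootMultiplicity (by unfold f; monicity!)
    (by unfold f; compute_degree!) (by simp [f]) hz
end

section
/- Let 𝔤 be a finite-dimensional solvable Lie algebra over ℂ with nilradical 𝔫. Then dim 𝔫 ≥ (1/2) dim 𝔤. -/
/-!
By Lie's theorem a finite-dimensional module `M` of a solvable complex Lie algebra `L` has a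
common eigenvector; its weight is a character of `L`, so vanishes on `[L, L]`. Peeling off weight
spaces one at a time, the elements of `L` killed by at most `dim M` such characters act nilpotently
on `M`. For `M = [L, L]` this gives an ideal `I ⊇ [L, L]` of codimension at most `dim [L, L]`
acting nilpotently on `[L, L]`. Since `ad x` maps `L` into `[L, L]`, every `ad x` with `x ∈ I` is
nilpotent, so `I` is nilpotent by Engel's theorem and `I ⊆ 𝔫`. Hence
`dim L ≤ dim [L, L] + dim I ≤ 2 dim 𝔫`.
-/

open Module LieAlgebra

theorem Module.End.isNilpotent_of_isNilpotent_mapQ {R M : Type*} [Ring R] [AddCommGroup M]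
    [Module R M] {f : End R M} {p : Submodule R M} (hp : p ≤ p.comap f)
    (hq : IsNilpotent (p.mapQ p f hp)) (hpf : p ≤ LinearMap.ker f) : IsNilpotent f := by
  obtain ⟨n, hn⟩ := hq
  refine ⟨n + 1, LinearMap.ext fun m ↦ ?_⟩
  have hm : (f ^ n) m ∈ p := by
    have := LinearMap.congr_fun hn (Submodule.Quotient.mk m)
    rwa [← p.mapQ_pow hp n, Submodule.mapQ_apply, LinearMap.zero_apply,
      Submodule.Quotient.mk_eq_zero] at this
  simpa [pow_succ'] using hpf hm

theorem Submodule.finrank_le_finrank_inf_ker_add_one {K V : Type*} [Field K] [AddCommGroup V]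
    [Module K V] [FiniteDimensional K V] (p : Submodule K V) (φ : Dual K V) :
    finrank K p ≤ finrank K ↥(p ⊓ LinearMap.ker φ) + 1 := by
  have hker : finrank K V ≤ finrank K (LinearMap.ker φ) + 1 := by
    have := φ.finrank_range_add_finrank_ker
    have := (LinearMap.range φ).finrank_le
    rw [finrank_self] at this
    omega
  have := Submodule.finrank_sup_add_finrank_inf_eq p (LinearMap.ker φ)
  have := (p ⊔ LinearMap.ker φ).finrank_le
  omega

section

variable {k L M : Type*} [Field k] [CharZero k] [LieRing L] [LieAlgebra k L] [IsSolvable L]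
  [AddCommGroup M] [Module k M] [LieRingModule L M] [LieModule k L M] [FiniteDimensional k M]

theorem LieModule.exists_lieCharacter_nontrivial_weightSpace [IsTriangularizable k L M]
    [Nontrivial M] : ∃ χ : LieCharacter k L, Nontrivial (weightSpace M χ) := by
  obtain ⟨χ, hχ⟩ := exists_nontrivial_weightSpace_of_isSolvable k L M
  obtain ⟨⟨v, hv⟩, hv0⟩ := exists_ne (0 : weightSpace M χ)
  rw [mem_weightSpace] at hv
  have hv0 : v ≠ 0 := by simpa using hv0
  have hχ_lie (x y : L) : χ ⁅x, y⁆ = 0 := by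
    have : χ ⁅x, y⁆ • v = 0 := by
      rw [← hv, lie_lie, hv, hv, lie_smul, lie_smul, hv, hv, smul_smul, smul_smul, mul_comm,
        sub_self]
    exact (smul_eq_zero.mp this).resolve_right hv0
  -- `LieCharacter k L` makes `k` a Lie algebra through this non-instance.
  let : LieRing k := LieRing.ofAssociativeRing
  refine ⟨⟨χ, fun {x y} ↦ ?_⟩, hχ⟩
  change χ ⁅x, y⁆ = χ x * χ y - χ y * χ x
  rw [hχ_lie, mul_comm, sub_self]

theorem LieModule.exists_lieIdeal_codim_le_finrank_isNilpotent_toEnd [IsAlgClosed k]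
    [FiniteDimensional k L] :
    ∃ I : LieIdeal k L, derivedSeries k L 1 ≤ I ∧ finrank k L ≤ finrank k M + finrank k I ∧
      ∀ x ∈ I, _root_.IsNilpotent (toEnd k L M x) := by
  induction hn : finrank k M using Nat.strong_induction_on generalizing M with
  | _ n ih =>
  rcases subsingleton_or_nontrivial M with hM | hM
  · refine ⟨⊤, le_top, ?_, fun x _ ↦ ⟨1, Subsingleton.elim _ _⟩⟩
    exact le_add_left (finrank_top k L).ge
  obtain ⟨χ, hχ⟩ := exists_lieCharacter_nontrivial_weightSpace (k := k) (L := L) (M := M)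
  set S := weightSpace M χ
  have hlt : finrank k (M ⧸ S) < n := by
    have h : finrank k (M ⧸ S) + finrank k S = n :=
      hn ▸ Submodule.finrank_quotient_add_finrank S.toSubmodule
    have : 0 < finrank k S := finrank_pos
    omega
  obtain ⟨I, hDI, hdim, hnil⟩ := ih _ hlt rfl
  let : LieRing k := LieRing.ofAssociativeRing
  refine ⟨I ⊓ χ.ker, le_inf hDI fun x hx ↦ χ.mem_ker.mpr (lieCharacter_apply_of_mem_derived χ hx),
    ?_, fun x hx ↦ ?_⟩
  · have := Submodule.finrank_le_finrank_inf_ker_add_one I.toSubmodule (χ : L →ₗ[k] k)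
    change finrank k I ≤ finrank k ↥(I ⊓ χ.ker) + 1 at this
    omega
  · rw [LieSubmodule.mem_inf, LieHom.mem_ker] at hx
    refine Module.End.isNilpotent_of_isNilpotent_mapQ (p := S.toSubmodule)
      (fun m hm ↦ S.lie_mem hm) (hnil x hx.1) fun m hm ↦ ?_
    rw [LieSubmodule.mem_toSubmodule, mem_weightSpace] at hm
    simp [hm x, hx.2]

end

theorem LieAlgebra.isNilpotent_ad_of_isNilpotent_toEnd_derivedSeries {R L : Type*} [CommRing R]
    [LieRing L] [LieAlgebra R L] {x : L}
    (h : IsNilpotent (LieModule.toEnd R L (derivedSeries R L 1) x)) :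
    IsNilpotent (ad R L x) := by
  obtain ⟨n, hn⟩ := h
  refine ⟨n + 1, LinearMap.ext fun z ↦ ?_⟩
  have hxz : ⁅x, z⁆ ∈ derivedSeries R L 1 :=
    LieSubmodule.lie_mem_lie (LieSubmodule.mem_top x) (LieSubmodule.mem_top z)
  rw [pow_succ, Module.End.mul_apply, ad_apply]
  exact (LieSubmodule.coe_toEnd_pow R L L _ x ⟨_, hxz⟩ n).symm.trans (by rw [hn]; rfl)

theorem LieIdeal.isNilpotent_of_forall_isNilpotent_toEnd_derivedSeries {R L : Type*} [CommRing R]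
    [LieRing L] [LieAlgebra R L] [IsNoetherian R L] (I : LieIdeal R L)
    (h : ∀ x ∈ I, IsNilpotent (LieModule.toEnd R L (derivedSeries R L 1) x)) :
    LieRing.IsNilpotent I := by
  rw [LieAlgebra.isNilpotent_iff_forall (R := R)]
  rintro ⟨x, hx⟩
  exact LieSubalgebra.isNilpotent_ad_of_isNilpotent_ad (I : LieSubalgebra R L) (x := ⟨x, hx⟩)
    (LieAlgebra.isNilpotent_ad_of_isNilpotent_toEnd_derivedSeries (h x hx))

theorem stmt_9_general (L : Type*) [LieRing L] [LieAlgebra ℂ L]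
    [FiniteDimensional ℂ L] [LieAlgebra.IsSolvable L]
    (N : LieIdeal ℂ L)
    (hmax : ∀ I : LieIdeal ℂ L, LieRing.IsNilpotent I → I ≤ N) :
    Module.finrank ℂ L ≤ 2 * Module.finrank ℂ N := by
  obtain ⟨I, hDI, hdim, hnil⟩ :=
    LieModule.exists_lieIdeal_codim_le_finrank_isNilpotent_toEnd (k := ℂ) (L := L)
      (M := derivedSeries ℂ L 1)
  have hIN : I ≤ N := hmax I (I.isNilpotent_of_forall_isNilpotent_toEnd_derivedSeries hnil)
  have hI : finrank ℂ I ≤ finrank ℂ N :=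
    Submodule.finrank_mono ((LieSubmodule.toSubmodule_le_toSubmodule _ _).mpr hIN)
  have hD : finrank ℂ (derivedSeries ℂ L 1) ≤ finrank ℂ N :=
    Submodule.finrank_mono ((LieSubmodule.toSubmodule_le_toSubmodule _ _).mpr (hDI.trans hIN))
  omega

/-- If `𝔤` is a finite-dimensional solvable complex Lie algebra and `𝔫` its
nilradical (the maximal nilpotent ideal), then `dim 𝔫 ≥ (1/2) dim 𝔤`. -/
theorem stmt_9 (L : Type*) [LieRing L] [LieAlgebra ℂ L]
    [FiniteDimensional ℂ L] [LieAlgebra.IsSolvable L]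
    (N : LieIdeal ℂ L)
    (hN : LieRing.IsNilpotent N)
    (hmax : ∀ I : LieIdeal ℂ L, LieRing.IsNilpotent I → I ≤ N) :
    Module.finrank ℂ L ≤ 2 * Module.finrank ℂ N :=
  stmt_9_general L N hmax
end

section
/- Let G be a locally compact group, H a closed normal subgroup, Γ a discrete subgroup of G, and π : G → G/H the quotient map. If Γ ∩ H is cocompact in H and Γ is cocompact in G, then ΓH = HΓ is a closed subgroup of G and π(Γ) is a discrete cocompact subgroup of G/H. -/
/-!
Choose a compact `K ⊆ H` with `H = K (Γ ∩ H)`. As `K ⊆ H`, the closed set `K · closure (Γ \ H)`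
misses `1`; its complement is a neighbourhood `U` of `1` with `U ∩ HΓ ⊆ U ∩ KΓ ⊆ H`. Hence `π U`
meets `π Γ` only in `1`, so `π Γ` is discrete, thus closed in the Hausdorff group `G / H`, and
`ΓH = π⁻¹ (π Γ)` is closed. Cocompactness passes to `π Γ` because `G / Γ` maps continuously onto
`(G / H) / π Γ`.
-/

open Set Filter Topology
open scoped Pointwise

lemma IsOpenMap.exists_isCompact_image_eq_univ {X Y : Type*} [TopologicalSpace X]
    [TopologicalSpace Y] [WeaklyLocallyCompactSpace X] [CompactSpace Y] {f : X → Y}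
    (hf : IsOpenMap f) (hsurj : f.Surjective) :
    ∃ K : Set X, IsCompact K ∧ f '' K = univ := by
  choose C hC hCx using fun x : X => exists_compact_mem_nhds x
  obtain ⟨t, ht⟩ := isCompact_univ.elim_finite_subcover (fun x => f '' interior (C x))
    (fun x => hf _ isOpen_interior) fun y _ => by
      obtain ⟨x, rfl⟩ := hsurj y
      exact mem_iUnion.2 ⟨x, mem_image_of_mem f (mem_interior_iff_mem_nhds.2 (hCx x))⟩
  refine ⟨⋃ x ∈ t, C x, t.isCompact_biUnion fun x _ => hC x, eq_univ_of_univ_subset ?_⟩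
  intro y hy
  obtain ⟨x, hxt, z, hz, rfl⟩ := mem_iUnion₂.1 (ht hy)
  exact ⟨z, mem_biUnion hxt (interior_subset hz), rfl⟩

lemma compactSpace_quotient_map_of_surjective {G G' : Type*} [Group G] [TopologicalSpace G]
    [Group G'] [TopologicalSpace G'] {φ : G →* G'}
    (hφ : Continuous φ) (hsurj : Function.Surjective φ) (Γ : Subgroup G)
    [CompactSpace (G ⧸ Γ)] : CompactSpace (G' ⧸ Γ.map φ) := by
  have hcont := hφ.quotient_map' (s := QuotientGroup.leftRel Γ)
    (t := QuotientGroup.leftRel (Γ.map φ)) fun a b hab => QuotientGroup.leftRel_apply.2 <| by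
      simpa using Subgroup.mem_map_of_mem φ (QuotientGroup.leftRel_apply.1 hab)
  refine Function.Surjective.compactSpace hcont fun y => ?_
  obtain ⟨_, rfl⟩ := QuotientGroup.mk_surjective y
  obtain ⟨g, rfl⟩ := hsurj ‹G'›
  exact ⟨QuotientGroup.mk g, rfl⟩

section

variable {G : Type*} [Group G] [TopologicalSpace G] [IsTopologicalGroup G]

lemma Subgroup.exists_isCompact_subset_mul_of_compactSpace_quotient (H Γ : Subgroup G)
    [WeaklyLocallyCompactSpace H] [CompactSpace (H ⧸ Γ.subgroupOf H)] :
    ∃ K : Set G, IsCompact K ∧ K ⊆ H ∧ (H : Set G) ⊆ K * Γ := by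
  obtain ⟨K, hK, hKim⟩ :=
    QuotientGroup.isOpenQuotientMap_mk.isOpenMap.exists_isCompact_image_eq_univ
      (QuotientGroup.mk_surjective (s := Γ.subgroupOf H))
  refine ⟨(↑) '' K, hK.image continuous_subtype_val, ?_, ?_⟩
  · rintro _ ⟨k, -, rfl⟩
    exact k.2
  · intro h hh
    obtain ⟨k, hkK, hk⟩ :
        (QuotientGroup.mk ⟨h, hh⟩ : H ⧸ Γ.subgroupOf H) ∈ QuotientGroup.mk '' K :=
      hKim ▸ mem_univ _
    exact ⟨k, mem_image_of_mem _ hkK, k⁻¹ * h, Subgroup.mem_subgroupOf.1 (QuotientGroup.eq.1 hk),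
      mul_inv_cancel_left _ _⟩

/-- `G` need not be Hausdorff, so `Γ` need not be closed; still, by discreteness of `Γ`, every
point of `closure (Γ \ F)` is inseparable from a point of `Γ \ F`. -/
lemma disjoint_closure_diff_of_isClosed (Γ : Subgroup G) [DiscreteTopology Γ]
    {F : Set G} (hF : IsClosed F) : Disjoint (closure ((Γ : Set G) \ F)) F := by
  rw [Set.disjoint_iff]
  rintro x ⟨hxcl, hxF⟩
  obtain ⟨V, hV, hVΓ⟩ := nhds_inter_eq_singleton_of_mem_discrete
    (isDiscrete_iff_discreteTopology.mpr ‹_›) Γ.one_mem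
  obtain ⟨W, hW, hWV⟩ := exists_nhds_split_inv hV
  have hnhds : ∀ O ∈ 𝓝 (1 : G), (fun y => y / x) ⁻¹' O ∈ 𝓝 x := fun O hO =>
    (continuous_id.div_const x).tendsto' x 1 (div_self' x) hO
  obtain ⟨γ, hγW, hγΓ, hγF⟩ := mem_closure_iff_nhds.1 hxcl _ (hnhds W hW)
  have hγx : (γ / x) ⤳ 1 := by
    refine specializes_iff_pure.2 fun O hO => ?_
    obtain ⟨δ, ⟨hδO, hδW⟩, hδΓ, -⟩ := mem_closure_iff_nhds.1 hxcl _ (hnhds _ (inter_mem hO hW))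
    have : δ / γ ∈ V ∩ Γ := ⟨by simpa using hWV _ hδW _ hγW, Γ.div_mem hδΓ hγΓ⟩
    rw [hVΓ, mem_singleton_iff, div_eq_one] at this
    exact this ▸ hδO
  have hxγ : x ⤳ γ := by
    simpa using (hγx.symm.map (continuous_mul_const x))
  exact hγF (hxγ.mem_closed hF hxF)

lemma exists_isOpen_one_mem_inter_mul_subset {H : Subgroup G} (hH : IsClosed (H : Set G))
    (Γ : Subgroup G) [DiscreteTopology Γ] {K : Set G} (hK : IsCompact K) (hKH : K ⊆ H) :
    ∃ U : Set G, IsOpen U ∧ (1 : G) ∈ U ∧ U ∩ (K * Γ) ⊆ H := by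
  have hdisj := disjoint_closure_diff_of_isClosed Γ hH
  refine ⟨(K * closure ((Γ : Set G) \ H))ᶜ,
    (isClosed_closure.mul_left_of_isCompact hK).isOpen_compl, ?_, ?_⟩
  · rintro ⟨k, hk, c, hc, hkc⟩
    exact hdisj.ne_of_mem hc (H.inv_mem (hKH hk)) (eq_inv_of_mul_eq_one_right hkc)
  · rintro _ ⟨hU, k, hk, γ, hγ, rfl⟩
    by_contra hkγ
    exact hU ⟨k, hk, γ, subset_closure ⟨hγ, fun hγH => hkγ (H.mul_mem (hKH hk) hγH)⟩, rfl⟩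

lemma discreteTopology_map_mk (H : Subgroup G) [H.Normal] (hH : IsClosed (H : Set G))
    (Γ : Subgroup G) [DiscreteTopology Γ] {K : Set G} (hK : IsCompact K) (hKH : K ⊆ H)
    (hHK : (H : Set G) ⊆ K * Γ) : DiscreteTopology (Γ.map (QuotientGroup.mk' H)) := by
  obtain ⟨U, hUo, hU1, hUH⟩ := exists_isOpen_one_mem_inter_mul_subset hH Γ hK hKH
  apply discreteTopology_of_isOpen_singleton_one
  convert (QuotientGroup.isOpenQuotientMap_mk.isOpenMap U hUo).preimage continuous_subtype_val
  ext ⟨_, γ, hγ, rfl⟩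
  simp only [mem_singleton_iff, mem_preimage]
  constructor
  · intro h1
    exact ⟨1, hU1, congrArg Subtype.val h1.symm⟩
  · rintro ⟨u, hu, hγu⟩
    obtain ⟨k, hk, c, hc, hkc⟩ := hHK (‹H.Normal›.mem_comm (QuotientGroup.eq.1 hγu.symm))
    have huK : u ∈ K * Γ :=
      ⟨k, hk, c * γ, Γ.mul_mem hc hγ, by simp only [← mul_assoc, hkc, inv_mul_cancel_right]⟩
    exact Subtype.ext (hγu.symm.trans ((QuotientGroup.eq_one_iff u).2 (hUH ⟨hu, huK⟩)))

end

/-- Let `G` be a locally compact topological group, `H` a closed normal subgroup,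
`Γ` a discrete subgroup, and `π : G → G/H` the quotient map. If `Γ ∩ H` is
cocompact in `H` and `Γ` is cocompact in `G`, then `ΓH = HΓ` is a closed subset
of `G` and `π(Γ)` is a discrete cocompact subgroup of `G/H`. -/
theorem stmt_18 (G : Type*) [Group G] [TopologicalSpace G] [IsTopologicalGroup G]
    [LocallyCompactSpace G]
    (H : Subgroup G) [H.Normal] (hHclosed : IsClosed (H : Set G))
    (Γ : Subgroup G) [DiscreteTopology Γ]
    (hΓH : CompactSpace (H ⧸ Γ.subgroupOf H))
    (hΓ : CompactSpace (G ⧸ Γ)) :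
    (Γ : Set G) * (H : Set G) = (H : Set G) * (Γ : Set G) ∧
    IsClosed ((Γ : Set G) * (H : Set G)) ∧
    DiscreteTopology ↥(Γ.map (QuotientGroup.mk' H)) ∧
    CompactSpace ((G ⧸ H) ⧸ Γ.map (QuotientGroup.mk' H)) := by
  have : WeaklyLocallyCompactSpace H := hHclosed.weaklyLocallyCompactSpace
  obtain ⟨K, hK, hKH, hHK⟩ := H.exists_isCompact_subset_mul_of_compactSpace_quotient Γ
  have hdisc := discreteTopology_map_mk H hHclosed Γ hK hKH hHK
  have hclosed : IsClosed ((Γ : Set G) * (H : Set G)) := by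
    rw [← Subgroup.mul_normal, ← QuotientGroup.ker_mk' H, ← Subgroup.comap_map_eq]
    exact (Subgroup.isClosed_of_discrete (H := Γ.map (QuotientGroup.mk' H))).preimage
      QuotientGroup.continuous_mk
  exact ⟨by rw [← Subgroup.mul_normal, ← Subgroup.normal_mul, sup_comm], hclosed, hdisc,
    compactSpace_quotient_map_of_surjective QuotientGroup.continuous_mk
      (QuotientGroup.mk'_surjective H) Γ⟩
end
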